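/- arXiv:2003.09449 — 5 statements merged into one kernel-verified Lean document; each statement's English description precedes it below -/
import Mathlib

section
/- Let X be a real Banach space and P : X → ℝ a nonzero continuous 2-homogeneous polynomial which admits a k-dimensional P-maximal subspace M. If H ⊆ X is an m-dimensional linear subspace with P identically zero on H, then m ≤ k. -/
/-- `P : X → ℝ` is an `n`-homogeneous polynomial: there is a symmetric `n`-linear form `A`
with `P x = A (x, …, x)`. -/
def IsHomogPoly {X : Type*} [NormedAddCommGroup X] [NormedSpace ℝ X]
    (n : ℕ) (P : X → ℝ) : Prop :=
  ∃ A : MultilinearMap ℝ (fun _ : Fin n => X) ℝ,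
    (∀ (σ : Equiv.Perm (Fin n)) (v : Fin n → X), (A fun i => v (σ i)) = A v) ∧
    ∀ x, P x = A fun _ => x

/-- `P` is a continuous `n`-homogeneous polynomial. -/
def IsContHomogPoly {X : Type*} [NormedAddCommGroup X] [NormedSpace ℝ X]
    (n : ℕ) (P : X → ℝ) : Prop :=
  IsHomogPoly n P ∧ ∃ C : ℝ, ∀ x, ‖P x‖ ≤ C * ‖x‖ ^ n

/-- `M` is a `P`-maximal subspace: a proper subspace on which `P` vanishes identically
and which is maximal among subspaces on which `P` vanishes. -/
def IsPMaximal {X : Type*} [NormedAddCommGroup X] [NormedSpace ℝ X]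
    (P : X → ℝ) (M : Submodule ℝ X) : Prop :=
  M ≠ ⊤ ∧ (∀ x ∈ M, P x = 0) ∧
    ∀ M₁ : Submodule ℝ X, M ≤ M₁ → (∀ x ∈ M₁, P x = 0) → M₁ = M

/-!
Polarising `P` gives a quadratic form `Q` with `P = Q`. Since `polar Q` vanishes on `H × H`,
`h ↦ polar Q h ·` maps `H` into the annihilator of `H ∩ M` in the dual of `M`, which has dimension
`dim M - dim (H ∩ M)`. By maximality of `M`, an `h ∈ H` with `polar Q h M = 0` lies in `M`, so the
kernel of this map has dimension at most `dim (H ∩ M)`; rank–nullity then gives `dim H ≤ dim M`.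
-/

open Module

namespace QuadraticMap

variable {R M N : Type*} [CommRing R] [AddCommGroup M] [Module R M] [AddCommGroup N] [Module R N]

def IsTotallySingular (Q : QuadraticMap R M N) (W : Submodule R M) : Prop :=
  ∀ x ∈ W, Q x = 0

variable {Q : QuadraticMap R M N} {W : Submodule R M}

theorem IsTotallySingular.polar_eq_zero (hW : Q.IsTotallySingular W) {x y : M} (hx : x ∈ W)
    (hy : y ∈ W) : polar Q x y = 0 := by
  simp [polar, hW x hx, hW y hy, hW _ (W.add_mem hx hy)]

theorem IsTotallySingular.sup_span_singleton (hW : Q.IsTotallySingular W) {x : M} (hx : Q x = 0)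
    (horth : ∀ y ∈ W, polar Q x y = 0) : Q.IsTotallySingular (W ⊔ R ∙ x) := by
  intro z hz
  obtain ⟨y, hy, _, hcx, rfl⟩ := Submodule.mem_sup.mp hz
  obtain ⟨c, rfl⟩ := Submodule.mem_span_singleton.mp hcx
  have hpolar : polar Q y (c • x) = 0 := by
    rw [polar_smul_right, polar_comm, horth y hy, smul_zero]
  rwa [polar, hW y hy, Q.map_smul, hx, smul_zero, sub_zero, sub_zero] at hpolar

theorem mem_of_maximal_isTotallySingular (hW : Maximal Q.IsTotallySingular W) {x : M}
    (hx : Q x = 0) (horth : ∀ y ∈ W, polar Q x y = 0) : x ∈ W :=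
  hW.2 (hW.1.sup_span_singleton hx horth) le_sup_left <|
    Submodule.mem_sup_right (Submodule.mem_span_singleton_self x)

theorem finrank_le_of_maximal_isTotallySingular {K V : Type*} [Field K] [AddCommGroup V]
    [Module K V] {Q : QuadraticForm K V} {M H : Submodule K V} [FiniteDimensional K M]
    [FiniteDimensional K H] (hM : Maximal Q.IsTotallySingular M) (hH : Q.IsTotallySingular H) :
    finrank K H ≤ finrank K M := by
  let φ : H →ₗ[K] Dual K M := Q.polarBilin.compl₁₂ H.subtype M.subtype
  have hdim_inf : ∀ A B : Submodule K V, finrank K (A.comap B.subtype) = finrank K ↥(B ⊓ A) :=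
    fun A B => by rw [← Submodule.finrank_map_subtype_eq, Submodule.map_comap_subtype]
  have hker : LinearMap.ker φ ≤ M.comap H.subtype := fun h hh =>
    mem_of_maximal_isTotallySingular hM (hH h h.2) fun y hy =>
      LinearMap.congr_fun hh ⟨y, hy⟩
  have hrange : LinearMap.range φ ≤ (H.comap M.subtype).dualAnnihilator := by
    rintro _ ⟨h, rfl⟩
    exact (Submodule.mem_dualAnnihilator _).mpr fun y hy => hH.polar_eq_zero h.2 hy
  calc finrank K H = finrank K (LinearMap.range φ) + finrank K (LinearMap.ker φ) :=
        (LinearMap.finrank_range_add_finrank_ker φ).symm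
    _ ≤ finrank K (H.comap M.subtype).dualAnnihilator + finrank K (M.comap H.subtype) :=
        add_le_add (Submodule.finrank_mono hrange) (Submodule.finrank_mono hker)
    _ = finrank K M := by
        rw [hdim_inf, inf_comm, ← hdim_inf, add_comm,
          Subspace.finrank_add_finrank_dualAnnihilator_eq]

end QuadraticMap

theorem IsHomogPoly.exists_quadraticForm {X : Type*} [NormedAddCommGroup X] [NormedSpace ℝ X]
    {P : X → ℝ} (hP : IsHomogPoly 2 P) : ∃ Q : QuadraticForm ℝ X, ⇑Q = P := by
  obtain ⟨A, -, hPA⟩ := hP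
  let B : LinearMap.BilinForm ℝ X :=
    (MultilinearMap.ofSubsingletonₗ (S := ℝ) ℝ X ℝ (0 : Fin 1)).symm.toLinearMap ∘ₗ A.curryLeft
  refine ⟨B.toQuadraticMap, funext fun x => ?_⟩
  have hcons : (Fin.cons x fun _ => x : Fin 2 → X) = fun _ => x := by
    funext i; cases i using Fin.cases <;> rfl
  simp [B, hPA, hcons]

theorem dim_le_of_pMaximal_finiteDim_general {X : Type*} [NormedAddCommGroup X] [NormedSpace ℝ X]
    (P : X → ℝ) (hP : IsContHomogPoly 2 P)
    (k m : ℕ) (M : Submodule ℝ X) (hM : IsPMaximal P M)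
    [FiniteDimensional ℝ M] (hMk : Module.finrank ℝ M = k)
    (H : Submodule ℝ X) [FiniteDimensional ℝ H] (hHm : Module.finrank ℝ H = m)
    (hH : ∀ x ∈ H, P x = 0) :
    m ≤ k := by
  obtain ⟨Q, rfl⟩ := hP.1.exists_quadraticForm
  have hMmax : Maximal Q.IsTotallySingular M :=
    ⟨hM.2.1, fun W hW hMW => (hM.2.2 W hMW hW).le⟩
  exact hMk ▸ hHm ▸ QuadraticMap.finrank_le_of_maximal_isTotallySingular hMmax hH

/-- If a nonzero continuous 2-homogeneous polynomial `P` on a real Banach space has a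
`k`-dimensional `P`-maximal subspace `M`, then any `m`-dimensional subspace `H` on which
`P` vanishes identically satisfies `m ≤ k`. -/
theorem dim_le_of_pMaximal_finiteDim {X : Type*} [NormedAddCommGroup X] [NormedSpace ℝ X]
    [CompleteSpace X] (P : X → ℝ) (hP : IsContHomogPoly 2 P) (hP0 : P ≠ 0)
    (k m : ℕ) (M : Submodule ℝ X) (hM : IsPMaximal P M)
    [FiniteDimensional ℝ M] (hMk : Module.finrank ℝ M = k)
    (H : Submodule ℝ X) [FiniteDimensional ℝ H] (hHm : Module.finrank ℝ H = m)
    (hH : ∀ x ∈ H, P x = 0) :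
    m ≤ k :=
  dim_le_of_pMaximal_finiteDim_general P hP k m M hM hMk H hHm hH
end

section
/- Let X be a real Banach space and P : X → ℝ a nonzero continuous 2-homogeneous polynomial. If there exists a k-dimensional P-maximal subspace of X, then every P-maximal subspace of X is k-dimensional. -/
section Aux

variable {X : Type*} [NormedAddCommGroup X] [NormedSpace ℝ X]

/-- A `2`-homogeneous polynomial comes from a symmetric bilinear form. -/
lemma IsHomogPoly.exists_bilin {P : X → ℝ} (hP : IsHomogPoly 2 P) :
    ∃ B : X →ₗ[ℝ] X →ₗ[ℝ] ℝ, (∀ x y, B x y = B y x) ∧ ∀ x, P x = B x x := by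
  obtain ⟨A, hsymm, hPA⟩ := hP
  have hupd0 : ∀ a b c : X, Function.update ![a, b] 0 c = ![c, b] := by
    intro a b c; funext i; fin_cases i <;> simp
  have hupd1 : ∀ a b c : X, Function.update ![a, b] 1 c = ![a, c] := by
    intro a b c; funext i; fin_cases i <;> simp
  refine ⟨LinearMap.mk₂ ℝ (fun x y => A ![x, y]) ?_ ?_ ?_ ?_, ?_, ?_⟩
  · intro x x' y
    have h := A.map_update_add ![x, y] 0 x x'
    rwa [hupd0, hupd0, hupd0] at h
  · intro c x y
    have h := A.map_update_smul ![x, y] 0 c x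
    rwa [hupd0, hupd0] at h
  · intro x y y'
    have h := A.map_update_add ![x, y] 1 y y'
    rwa [hupd1, hupd1, hupd1] at h
  · intro c x y
    have h := A.map_update_smul ![x, y] 1 c y
    rwa [hupd1, hupd1] at h
  · intro x y
    have h := hsymm (Equiv.swap 0 1) ![y, x]
    simp only [LinearMap.mk₂_apply]
    rw [← h]
    congr 1
    funext i; fin_cases i <;> simp [Equiv.swap_apply_left, Equiv.swap_apply_right]
  · intro x
    rw [hPA]
    simp only [LinearMap.mk₂_apply]
    congr 1
    funext i; fin_cases i <;> rfl

/-- Polarization: if `P` vanishes on a subspace, so does the associated bilinear form. -/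
lemma bilin_zero_of_vanish {P : X → ℝ} {B : X →ₗ[ℝ] X →ₗ[ℝ] ℝ}
    (hsym : ∀ x y, B x y = B y x) (hPB : ∀ x, P x = B x x)
    {S : Submodule ℝ X} (hS : ∀ x ∈ S, P x = 0) :
    ∀ x ∈ S, ∀ y ∈ S, B x y = 0 := by
  intro x hx y hy
  have h := hS (x + y) (S.add_mem hx hy)
  rw [hPB] at h
  simp only [map_add, LinearMap.add_apply] at h
  have hx0 := hS x hx; rw [hPB] at hx0
  have hy0 := hS y hy; rw [hPB] at hy0
  have hyx := hsym y x
  linarith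

/-- If `W` is `P`-maximal, `P` vanishes on `S`, and `n ∈ S` is `B`-orthogonal to `W`,
then `n ∈ W`. -/
lemma mem_of_perp {P : X → ℝ} {B : X →ₗ[ℝ] X →ₗ[ℝ] ℝ}
    (hsym : ∀ x y, B x y = B y x) (hPB : ∀ x, P x = B x x)
    {W S : Submodule ℝ X} (hW : IsPMaximal P W)
    (hS : ∀ x ∈ S, P x = 0) {n : X} (hn : n ∈ S)
    (hperp : ∀ w ∈ W, B n w = 0) : n ∈ W := by
  have hzero : ∀ x ∈ W ⊔ Submodule.span ℝ {n}, P x = 0 := by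
    intro x hx
    obtain ⟨m, hm, y, hy, rfl⟩ := Submodule.mem_sup.mp hx
    obtain ⟨t, rfl⟩ := Submodule.mem_span_singleton.mp hy
    have hBmm : B m m = 0 := by rw [← hPB]; exact hW.2.1 m hm
    have hBnn : B n n = 0 := by rw [← hPB]; exact hS n hn
    have hBnm : B n m = 0 := hperp m hm
    have hBmn : B m n = 0 := by rw [hsym]; exact hBnm
    rw [hPB]
    simp only [map_add, map_smul, LinearMap.add_apply, LinearMap.smul_apply, smul_eq_mul]
    rw [hBmm, hBnn, hBmn, hBnm]
    ring
  have heq := hW.2.2 _ le_sup_left hzero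
  have hmem : n ∈ W ⊔ Submodule.span ℝ {n} :=
    (le_sup_right : Submodule.span ℝ {n} ≤ _) (Submodule.mem_span_singleton_self n)
  rwa [heq] at hmem

open Module in
/-- Two `P`-maximal subspaces have the same dimension, given one is finite-dimensional. -/
lemma pMaximal_aux {P : X → ℝ} {B : X →ₗ[ℝ] X →ₗ[ℝ] ℝ}
    (hsym : ∀ x y, B x y = B y x) (hPB : ∀ x, P x = B x x)
    {M N : Submodule ℝ X} (hM : IsPMaximal P M) (hN : IsPMaximal P N)
    [FiniteDimensional ℝ M] :
    FiniteDimensional ℝ N ∧ finrank ℝ N = finrank ℝ M := by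
  have hMz := hM.2.1
  have hNz := hN.2.1
  have hMiso := bilin_zero_of_vanish hsym hPB hMz
  have hNiso := bilin_zero_of_vanish hsym hPB hNz
  set b : ↥M →ₗ[ℝ] ↥N →ₗ[ℝ] ℝ := (B.domRestrict M).compl₂ N.subtype with hb
  have hkerflip : LinearMap.ker b.flip = (M ⊓ N).comap N.subtype := by
    ext n
    simp only [LinearMap.mem_ker, Submodule.mem_comap, Submodule.mem_inf, Submodule.coe_subtype]
    constructor
    · intro h
      refine ⟨?_, n.2⟩
      refine mem_of_perp hsym hPB hM hNz n.2 (fun m hm => ?_)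
      have h0 : b.flip n ⟨m, hm⟩ = 0 := by rw [h]; rfl
      have : B m (n : X) = 0 := h0
      rw [hsym]; exact this
    · rintro ⟨h1, -⟩
      ext m
      exact hMiso _ m.2 _ h1
  have hkerb : LinearMap.ker b = (M ⊓ N).comap M.subtype := by
    ext m
    simp only [LinearMap.mem_ker, Submodule.mem_comap, Submodule.mem_inf, Submodule.coe_subtype]
    constructor
    · intro h
      refine ⟨m.2, ?_⟩
      refine mem_of_perp hsym hPB hN hMz m.2 (fun n hn => ?_)
      have h0 : b m ⟨n, hn⟩ = 0 := by rw [h]; rfl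
      exact h0
    · rintro ⟨-, h2⟩
      ext n
      exact hNiso _ h2 _ n.2
  have hMNfin : FiniteDimensional ℝ ↥(M ⊓ N) :=
    Submodule.finiteDimensional_of_le (inf_le_left : M ⊓ N ≤ M)
  have ekerflip : ↥(LinearMap.ker b.flip) ≃ₗ[ℝ] ↥(M ⊓ N) := by
    rw [hkerflip]
    exact Submodule.comapSubtypeEquivOfLe inf_le_right
  have ekerb : ↥(LinearMap.ker b) ≃ₗ[ℝ] ↥(M ⊓ N) := by
    rw [hkerb]
    exact Submodule.comapSubtypeEquivOfLe inf_le_left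
  have hNfin : FiniteDimensional ℝ ↥N := by
    have hrank : Module.rank ℝ ↥N < Cardinal.aleph0 := by
      rw [← LinearMap.rank_range_add_rank_ker b.flip]
      apply Cardinal.add_lt_aleph0
      · exact lt_of_le_of_lt (Submodule.rank_le _) (rank_lt_aleph0 ℝ (Dual ℝ ↥M))
      · exact lt_of_le_of_lt (ekerflip.rank_eq.le) (rank_lt_aleph0 ℝ ↥(M ⊓ N))
    exact Module.rank_lt_aleph0_iff.mp hrank
  refine ⟨hNfin, ?_⟩
  have hcomp : b.flip = b.dualMap.comp (Module.Dual.eval ℝ ↥N) := by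
    ext n m; rfl
  have hsurj : Function.Surjective (Module.Dual.eval ℝ ↥N) :=
    (Module.bijective_dual_eval ℝ ↥N).2
  have hrange : LinearMap.range b.flip = LinearMap.range b.dualMap := by
    rw [hcomp, LinearMap.range_comp, LinearMap.range_eq_top.mpr hsurj, Submodule.map_top]
  have hr : finrank ℝ ↥(LinearMap.range b.flip) = finrank ℝ ↥(LinearMap.range b) := by
    rw [hrange, LinearMap.finrank_range_dualMap_eq_finrank_range]
  have h1 : finrank ℝ ↥(LinearMap.range b.flip) + finrank ℝ ↥(LinearMap.ker b.flip)
      = finrank ℝ ↥N := LinearMap.finrank_range_add_finrank_ker b.flip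
  have h2 : finrank ℝ ↥(LinearMap.range b) + finrank ℝ ↥(LinearMap.ker b)
      = finrank ℝ ↥M := LinearMap.finrank_range_add_finrank_ker b
  have hd1 : finrank ℝ ↥(LinearMap.ker b.flip) = finrank ℝ ↥(M ⊓ N) := ekerflip.finrank_eq
  have hd2 : finrank ℝ ↥(LinearMap.ker b) = finrank ℝ ↥(M ⊓ N) := ekerb.finrank_eq
  omega

end Aux

/-- If a nonzero continuous 2-homogeneous polynomial `P` on a real Banach space has some
`k`-dimensional `P`-maximal subspace, then every `P`-maximal subspace is `k`-dimensional. -/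
theorem pMaximal_finrank_eq {X : Type*} [NormedAddCommGroup X] [NormedSpace ℝ X]
    [CompleteSpace X] (P : X → ℝ) (hP : IsContHomogPoly 2 P) (hP0 : P ≠ 0) (k : ℕ)
    (hex : ∃ M : Submodule ℝ X, IsPMaximal P M ∧ FiniteDimensional ℝ M ∧
      Module.finrank ℝ M = k) :
    ∀ N : Submodule ℝ X, IsPMaximal P N →
      FiniteDimensional ℝ N ∧ Module.finrank ℝ N = k := by
  obtain ⟨B, hsym, hPB⟩ := hP.1.exists_bilin
  obtain ⟨M, hM, hMfin, hMk⟩ := hex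
  intro N hN
  haveI := hMfin
  obtain ⟨hNfin, hNk⟩ := pMaximal_aux hsym hPB hM hN
  exact ⟨hNfin, hNk.trans hMk⟩
end

section
/- Let X be a real Banach space and P : X → ℝ a nonzero continuous 2-homogeneous polynomial. If P is identically zero on some infinite-dimensional linear subspace of X, then every P-maximal subspace of X is infinite-dimensional. -/
namespace Matrix

theorem update_vec_two_zero {α : Type*} (a b c : α) : Function.update ![a, b] 0 c = ![c, b] := by
  ext i; fin_cases i <;> simp

theorem update_vec_two_one {α : Type*} (a b c : α) : Function.update ![a, b] 1 c = ![a, c] := by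
  ext i; fin_cases i <;> simp

end Matrix

namespace MultilinearMap

variable {R M : Type*} [CommSemiring R] [AddCommMonoid M] [Module R M]

def toBilinForm (A : MultilinearMap R (fun _ : Fin 2 => M) R) : LinearMap.BilinForm R M :=
  LinearMap.mk₂ R (fun x y => A ![x, y])
    (fun x x' y => by simpa [Matrix.update_vec_two_zero] using A.map_update_add ![x, y] 0 x x')
    (fun c x y => by simpa [Matrix.update_vec_two_zero] using A.map_update_smul ![x, y] 0 c x)
    (fun x y y' => by simpa [Matrix.update_vec_two_one] using A.map_update_add ![x, y] 1 y y')
    (fun c x y => by simpa [Matrix.update_vec_two_one] using A.map_update_smul ![x, y] 1 c y)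

@[simp]
theorem toBilinForm_apply (A : MultilinearMap R (fun _ : Fin 2 => M) R) (x y : M) :
    A.toBilinForm x y = A ![x, y] :=
  rfl

end MultilinearMap

theorem IsHomogPoly.exists_bilinForm {X : Type*} [NormedAddCommGroup X] [NormedSpace ℝ X]
    {P : X → ℝ} (hP : IsHomogPoly 2 P) :
    ∃ B : LinearMap.BilinForm ℝ X, B.IsSymm ∧ ∀ x, P x = B x x := by
  obtain ⟨A, hsymm, hPA⟩ := hP
  refine ⟨A.toBilinForm, ⟨fun x y => ?_⟩, fun x => ?_⟩
  · have hswap : (fun i => ![y, x] (Equiv.swap 0 1 i)) = ![x, y] := by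
      ext i; fin_cases i <;> simp
    simpa [hswap] using hsymm (Equiv.swap 0 1) ![y, x]
  · have hdiag : (fun _ : Fin 2 => x) = ![x, x] := by
      ext i; fin_cases i <;> simp
    rw [hPA, hdiag, MultilinearMap.toBilinForm_apply]

namespace LinearMap.BilinForm

theorem sup_inf_orthogonal_isotropic {R M : Type*} [CommRing R] [AddCommGroup M] [Module R M]
    {B : LinearMap.BilinForm R M} (hB : B.IsSymm) {N L : Submodule R M} (hN : ∀ x ∈ N, B x x = 0)
    (hL : ∀ x ∈ L, B x x = 0) : ∀ x ∈ N ⊔ L ⊓ B.orthogonal N, B x x = 0 := by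
  intro x hx
  obtain ⟨n, hn, l, ⟨hl, hlN⟩, rfl⟩ := Submodule.mem_sup.mp hx
  have hnl : B n l = 0 := hlN n hn
  have hln : B l n = 0 := hB.eq n l ▸ hnl
  simp only [map_add, LinearMap.add_apply, hN n hn, hL l hl, hnl, hln, add_zero]

theorem fg_of_fg_inf_orthogonal {K V : Type*} [Field K] [AddCommGroup V] [Module K V]
    (B : LinearMap.BilinForm K V) {N L : Submodule K V} (hN : N.FG) (hL : (L ⊓ B.orthogonal N).FG) :
    L.FG := by
  have : Module.Finite K N := Module.Finite.iff_fg.mpr hN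
  have hker : LinearMap.ker (B.domRestrict N).flip = B.orthogonal N := by
    ext x; simp [BilinForm.mem_orthogonal_iff, LinearMap.ext_iff]
  refine Submodule.fg_of_fg_map_of_fg_inf_ker (B.domRestrict N).flip
    (IsNoetherian.noetherian _) ?_
  rwa [hker]

end LinearMap.BilinForm

theorem pMaximal_infiniteDim_general {X : Type*} [NormedAddCommGroup X] [NormedSpace ℝ X]
    (P : X → ℝ) (hP : IsContHomogPoly 2 P)
    (hex : ∃ M : Submodule ℝ X, ¬ FiniteDimensional ℝ M ∧ ∀ x ∈ M, P x = 0) :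
    ∀ N : Submodule ℝ X, IsPMaximal P N → ¬ FiniteDimensional ℝ N := by
  obtain ⟨B, hB, hPB⟩ := hP.1.exists_bilinForm
  obtain ⟨M, hMinf, hMP⟩ := hex
  rintro N ⟨-, hNP, hNmax⟩ hNfin
  simp only [hPB] at hMP hNP hNmax
  have hsup : N ⊔ M ⊓ B.orthogonal N = N :=
    hNmax _ le_sup_left (B.sup_inf_orthogonal_isotropic hB hNP hMP)
  have hM'fin : (M ⊓ B.orthogonal N).FG :=
    Module.Finite.iff_fg.mp (Submodule.finiteDimensional_of_le (sup_eq_left.mp hsup))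
  exact hMinf (Module.Finite.iff_fg.mpr
    (B.fg_of_fg_inf_orthogonal (Module.Finite.iff_fg.mp hNfin) hM'fin))

/-- If a nonzero continuous 2-homogeneous polynomial `P` on a real Banach space vanishes
identically on some infinite-dimensional subspace, then every `P`-maximal subspace is
infinite-dimensional. -/
theorem pMaximal_infiniteDim {X : Type*} [NormedAddCommGroup X] [NormedSpace ℝ X]
    [CompleteSpace X] (P : X → ℝ) (hP : IsContHomogPoly 2 P) (hP0 : P ≠ 0)
    (hex : ∃ M : Submodule ℝ X, ¬ FiniteDimensional ℝ M ∧ ∀ x ∈ M, P x = 0) :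
    ∀ N : Submodule ℝ X, IsPMaximal P N → ¬ FiniteDimensional ℝ N :=
  pMaximal_infiniteDim_general P hP hex
end

section
/- Fix a natural number k ≥ 1 and let P_k : ℓ²(ℝ) → ℝ be the continuous 2-homogeneous polynomial P_k(x) = −Σ_{i=1}^{k} x(i)² + Σ_{i=k+1}^{∞} x(i)². For j = 1, …, k let x_j ∈ ℓ² be the vector with x_j(i) = 1 if i = j or i = j + k, and x_j(i) = 0 otherwise. Then M_k = span{x₁, …, x_k} is a k-dimensional P_k-maximal subspace of ℓ²(ℝ); consequently every P_k-maximal subspace is k-dimensional. -/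
/-!
Write `P x = ⟪σ x, x⟫` with `σ` the self-adjoint map flipping the sign of the first `k`
coordinates. On the `+1`-eigenspace of `σ`, which contains every vector whose first `k`
coordinates vanish, `P` is `‖·‖²`; so on a subspace `M` where `P` vanishes, the first `k`
coordinates determine the vector and `dim M ≤ k`. The span of the `x_j` has dimension `k`, hence
is maximal. If `dim M < k`, a dimension count gives `u ≠ 0` in the `-1`-eigenspace and `w` in the
`+1`-eigenspace, both orthogonal to `M`, with `‖u‖ = ‖w‖`; then `σ (u + w) = w - u` is
orthogonal to `M` and `P (u + w) = ‖w‖² - ‖u‖² = 0`, so `M ⊔ ℝ (u + w)` is a larger subspace on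
which `P` vanishes.
-/

open scoped InnerProductSpace
open Module Module.End

instance FiniteDimensional.span_range_of_finite {K V ι : Type*} [DivisionRing K]
    [AddCommGroup V] [Module K V] [Finite ι] (f : ι → V) :
    FiniteDimensional K (Submodule.span K (Set.range f)) :=
  .span_of_finite K (Set.finite_range f)

theorem Submodule.exists_mem_orthogonal_ne_zero {𝕜 E : Type*} [RCLike 𝕜] [NormedAddCommGroup E]
    [InnerProductSpace 𝕜 E] {U M : Submodule 𝕜 E} [FiniteDimensional 𝕜 U]
    [FiniteDimensional 𝕜 M] (h : finrank 𝕜 M < finrank 𝕜 U) : ∃ u ∈ U, u ∈ Mᗮ ∧ u ≠ 0 := by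
  obtain ⟨⟨u, huU⟩, hu, hu0⟩ := Submodule.exists_mem_ne_zero_of_ne_bot <|
    LinearMap.ker_ne_bot_of_finrank_lt (f := M.orthogonalProjectionOnto.toLinearMap ∘ₗ U.subtype) h
  exact ⟨u, huU, M.orthogonalProjectionOnto_eq_zero_iff.mp hu, by simpa using hu0⟩

section Isotropic

variable {E : Type*} [NormedAddCommGroup E] [InnerProductSpace ℝ E] {σ : E →ₗ[ℝ] E}
  {M : Submodule ℝ E}

theorem inner_map_eq_zero_of_isotropic (hσ : σ.IsSymmetric) (hM : ∀ x ∈ M, ⟪σ x, x⟫_ℝ = 0)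
    {x y : E} (hx : x ∈ M) (hy : y ∈ M) : ⟪σ x, y⟫_ℝ = 0 := by
  have h := hM (x + y) (M.add_mem hx hy)
  rw [map_add, inner_add_left, inner_add_right, inner_add_right, hM x hx, hM y hy, hσ y x,
    real_inner_comm (σ x) y] at h
  linarith

theorem isotropic_span {S : Set E} (hS : ∀ a ∈ S, ∀ b ∈ S, ⟪σ a, b⟫_ℝ = 0) :
    ∀ x ∈ Submodule.span ℝ S, ⟪σ x, x⟫_ℝ = 0 := by
  have h : Submodule.span ℝ (σ '' S) ⟂ Submodule.span ℝ S := by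
    rw [Submodule.isOrtho_span]
    rintro _ ⟨a, ha, rfl⟩ b hb
    exact hS a ha b hb
  intro x hx
  exact h.inner_eq (Submodule.map_span σ S ▸ Submodule.mem_map_of_mem hx) hx

theorem isotropic_sup_span_singleton (hσ : σ.IsSymmetric) (hM : ∀ x ∈ M, ⟪σ x, x⟫_ℝ = 0)
    {y : E} (hMy : ∀ x ∈ M, ⟪σ x, y⟫_ℝ = 0) (hy : ⟪σ y, y⟫_ℝ = 0) :
    ∀ z ∈ M ⊔ Submodule.span ℝ {y}, ⟪σ z, z⟫_ℝ = 0 := by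
  rw [← Submodule.span_eq M, ← Submodule.span_union]
  apply isotropic_span
  rintro a (ha | rfl) b (hb | rfl)
  · exact inner_map_eq_zero_of_isotropic hσ hM ha hb
  · exact hMy a ha
  · rw [hσ, real_inner_comm]
    exact hMy b hb
  · exact hy

theorem not_isPMaximal_of_mem_eigenspace (hσ : σ.IsSymmetric) {u w : E}
    (huσ : u ∈ eigenspace σ (-1)) (hwσ : w ∈ eigenspace σ 1) (huM : u ∈ Mᗮ) (hwM : w ∈ Mᗮ)
    (hnorm : ‖u‖ = ‖w‖) (hu0 : u ≠ 0) : ¬IsPMaximal (fun x => ⟪σ x, x⟫_ℝ) M := by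
  rintro ⟨-, hM, hmax⟩
  rw [mem_eigenspace_iff, neg_one_smul] at huσ
  rw [mem_eigenspace_iff, one_smul] at hwσ
  have huw : ⟪u, w⟫_ℝ = 0 := by
    have h := hσ u w
    rw [huσ, hwσ, inner_neg_left] at h
    linarith
  have hMy : ∀ x ∈ M, ⟪σ x, u + w⟫_ℝ = 0 := by
    intro x hx
    rw [hσ, map_add, huσ, hwσ, inner_add_right, inner_neg_right,
      Submodule.inner_right_of_mem_orthogonal hx huM,
      Submodule.inner_right_of_mem_orthogonal hx hwM, neg_zero, add_zero]
  have hy : ⟪σ (u + w), u + w⟫_ℝ = 0 := by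
    rw [map_add, huσ, hwσ, inner_add_left, inner_add_right, inner_add_right, inner_neg_left,
      inner_neg_left, real_inner_self_eq_norm_sq, real_inner_self_eq_norm_sq, hnorm,
      real_inner_comm u w]
    ring
  have hyM : u + w ∈ M := by
    rw [← hmax _ le_sup_left (isotropic_sup_span_singleton hσ hM hMy hy)]
    exact Submodule.mem_sup_right (Submodule.mem_span_singleton_self _)
  have h := Submodule.inner_right_of_mem_orthogonal hyM huM
  rw [inner_add_left, real_inner_comm u w, huw, add_zero, inner_self_eq_zero] at h
  exact hu0 h

variable {F : Type*} [AddCommGroup F] [Module ℝ F] {h : E →ₗ[ℝ] F}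

theorem injective_comp_subtype_of_isotropic (hker : LinearMap.ker h ≤ eigenspace σ 1)
    (hM : ∀ x ∈ M, ⟪σ x, x⟫_ℝ = 0) : Function.Injective (h ∘ₗ M.subtype) := by
  rw [← LinearMap.ker_eq_bot, LinearMap.ker_eq_bot']
  intro x hx
  have hσx : σ x = x := by simpa using mem_eigenspace_iff.mp (hker hx)
  have hx0 := hM x x.2
  rw [hσx, inner_self_eq_zero] at hx0
  exact Subtype.ext hx0

theorem isPMaximal_of_finrank_eq [FiniteDimensional ℝ F]
    (hker : LinearMap.ker h ≤ eigenspace σ 1) (hM : ∀ x ∈ M, ⟪σ x, x⟫_ℝ = 0)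
    (hσ1 : HasEigenvalue σ 1) (hMF : finrank ℝ M = finrank ℝ F) :
    IsPMaximal (fun x => ⟪σ x, x⟫_ℝ) M := by
  refine ⟨fun htop => ?_, hM, fun M₁ hMM₁ hM₁ => ?_⟩
  · obtain ⟨x, hx⟩ := hσ1.exists_hasEigenvector
    have hx0 := hM x (htop ▸ Submodule.mem_top)
    rw [hx.apply_eq_smul, one_smul, inner_self_eq_zero] at hx0
    exact hx.2 hx0
  · have hinj := injective_comp_subtype_of_isotropic hker hM₁
    have := FiniteDimensional.of_injective _ hinj
    refine (Submodule.eq_of_le_of_finrank_eq hMM₁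
      ((Submodule.finrank_mono hMM₁).antisymm ?_)).symm
    exact hMF ▸ LinearMap.finrank_le_finrank_of_injective hinj

theorem finrank_eq_of_isPMaximal [FiniteDimensional ℝ F] (hσ : σ.IsSymmetric)
    (hker : LinearMap.ker h ≤ eigenspace σ 1) {U W : Submodule ℝ E} [FiniteDimensional ℝ U]
    [FiniteDimensional ℝ W] (hU : U ≤ eigenspace σ (-1)) (hW : W ≤ eigenspace σ 1)
    (hUF : finrank ℝ F ≤ finrank ℝ U) (hWF : finrank ℝ F ≤ finrank ℝ W)
    (hmax : IsPMaximal (fun x => ⟪σ x, x⟫_ℝ) M) :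
    FiniteDimensional ℝ M ∧ finrank ℝ M = finrank ℝ F := by
  have hinj := injective_comp_subtype_of_isotropic hker hmax.2.1
  have hM := FiniteDimensional.of_injective _ hinj
  refine ⟨hM, (LinearMap.finrank_le_finrank_of_injective hinj).antisymm ?_⟩
  by_contra! hlt
  obtain ⟨u, huU, huM, hu0⟩ := Submodule.exists_mem_orthogonal_ne_zero (hlt.trans_le hUF)
  obtain ⟨w, hwW, hwM, hw0⟩ := Submodule.exists_mem_orthogonal_ne_zero (hlt.trans_le hWF)
  refine not_isPMaximal_of_mem_eigenspace hσ (hU huU)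
    ((eigenspace σ 1).smul_mem (‖u‖ / ‖w‖) (hW hwW)) huM (Mᗮ.smul_mem _ hwM) ?_ hu0 hmax
  rw [norm_smul, norm_div, norm_norm, norm_norm, div_mul_cancel₀ _ (norm_ne_zero_iff.mpr hw0)]

end Isotropic

local notation "ℓ²" => lp (fun _ : ℕ => ℝ) 2

namespace lp

noncomputable def signFlip (k : ℕ) : ℓ² →ₗ[ℝ] ℓ² where
  toFun x := ⟨fun i => (if i < k then -1 else 1) * x i,
    (lp.memℓp x).mono' fun i => by split_ifs <;> simp⟩
  map_add' x y := by ext i; exact mul_add ..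
  map_smul' c x := by ext i; exact mul_left_comm ..

theorem signFlip_apply (k : ℕ) (x : ℓ²) (i : ℕ) :
    signFlip k x i = (if i < k then -1 else 1) * x i := rfl

theorem inner_signFlip_left (k : ℕ) (x y : ℓ²) :
    ⟪signFlip k x, y⟫_ℝ = ∑' i, (if i < k then (-1 : ℝ) else 1) * (x i * y i) := by
  rw [lp.inner_eq_tsum]
  congr 1 with i
  rw [signFlip_apply, RCLike.inner_apply, conj_trivial]
  ring

theorem inner_signFlip_self (k : ℕ) (x : ℓ²) :
    ⟪signFlip k x, x⟫_ℝ = ∑' i, (if i < k then (-1 : ℝ) else 1) * x i ^ 2 := by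
  simp_rw [inner_signFlip_left, sq]

theorem signFlip_isSymmetric (k : ℕ) : (signFlip k).IsSymmetric := by
  intro x y
  rw [inner_signFlip_left, real_inner_comm, inner_signFlip_left]
  simp_rw [mul_comm (x _)]

theorem signFlip_single (k i : ℕ) (a : ℝ) :
    signFlip k (lp.single 2 i a) = lp.single 2 i ((if i < k then -1 else 1) * a) := by
  ext j
  rcases eq_or_ne j i with rfl | hji <;> simp [signFlip_apply, *]

theorem single_mem_eigenspace_signFlip_of_lt {k i : ℕ} (hi : i < k) :
    lp.single 2 i 1 ∈ eigenspace (signFlip k) (-1) := by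
  simp [signFlip_single, hi, lp.single_neg]

theorem single_mem_eigenspace_signFlip_of_le {k i : ℕ} (hi : k ≤ i) :
    lp.single 2 i 1 ∈ eigenspace (signFlip k) 1 := by
  simp [signFlip_single, hi.not_gt]

theorem orthonormal_single_comp {ι : Type*} {g : ι → ℕ} (hg : g.Injective) :
    Orthonormal ℝ fun j => (lp.single 2 (g j) 1 : ℓ²) := by
  classical
  rw [orthonormal_iff_ite]
  intro i j
  simp [lp.inner_single_left, Pi.single_apply, hg.eq_iff]

theorem hasEigenvalue_signFlip_one (k : ℕ) : HasEigenvalue (signFlip k) 1 :=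
  hasEigenvalue_of_hasEigenvector ⟨single_mem_eigenspace_signFlip_of_le le_rfl,
    (orthonormal_single_comp (g := id) Function.injective_id).ne_zero k⟩

theorem finrank_span_single_comp {k : ℕ} {g : Fin k → ℕ} (hg : g.Injective) :
    finrank ℝ (Submodule.span ℝ (Set.range fun j => (lp.single 2 (g j) 1 : ℓ²))) = k :=
  (finrank_span_eq_card (orthonormal_single_comp hg).linearIndependent).trans
    (Fintype.card_fin k)

theorem span_single_le_eigenspace_signFlip_neg_one (k : ℕ) :
    Submodule.span ℝ (Set.range fun j : Fin k => (lp.single 2 (j : ℕ) 1 : ℓ²)) ≤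
      eigenspace (signFlip k) (-1) :=
  Submodule.span_le.mpr <| Set.range_subset_iff.mpr fun j =>
    single_mem_eigenspace_signFlip_of_lt j.2

theorem span_single_add_le_eigenspace_signFlip_one (k : ℕ) :
    Submodule.span ℝ (Set.range fun j : Fin k => (lp.single 2 ((j : ℕ) + k) 1 : ℓ²)) ≤
      eigenspace (signFlip k) 1 :=
  Submodule.span_le.mpr <| Set.range_subset_iff.mpr fun j =>
    single_mem_eigenspace_signFlip_of_le (Nat.le_add_left k j)

noncomputable def headₗ (k : ℕ) : ℓ² →ₗ[ℝ] (Fin k → ℝ) :=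
  LinearMap.pi fun j => lp.evalₗ _ 2 (j : ℕ)

theorem ker_headₗ_le_eigenspace_signFlip (k : ℕ) :
    LinearMap.ker (headₗ k) ≤ eigenspace (signFlip k) 1 := by
  intro x hx
  rw [mem_eigenspace_iff, one_smul]
  ext i
  rw [signFlip_apply]
  split_ifs with hi
  · simp [show x i = 0 from congrFun hx ⟨i, hi⟩]
  · rw [one_mul]

theorem headₗ_single_add_single {k : ℕ} (j : Fin k) :
    headₗ k (lp.single 2 (j : ℕ) 1 + lp.single 2 ((j : ℕ) + k) 1) = Pi.single j 1 := by
  ext i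
  simp [headₗ, Pi.single_apply, Fin.ext_iff]
  omega

theorem inner_signFlip_single_add_single {k i j : ℕ} (hi : i < k) (hj : j < k) :
    ⟪signFlip k (lp.single 2 i 1 + lp.single 2 (i + k) 1),
      lp.single 2 j 1 + lp.single 2 (j + k) 1⟫_ℝ = 0 := by
  have h₁ : i + k ≠ j := by omega
  have h₂ : i ≠ j + k := by omega
  simp [signFlip_single, hi, inner_add_left, inner_add_right, lp.inner_single_left,
    Pi.single_apply, h₁, h₂]

end lp

theorem exampleLtwo_pMaximal_general (k : ℕ)
    (P : lp (fun _ : ℕ => ℝ) 2 → ℝ)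
    (hP : ∀ x : lp (fun _ : ℕ => ℝ) 2,
      P x = ∑' i : ℕ, (if i < k then (-1 : ℝ) else 1) * (x i) ^ 2)
    (v : Fin k → lp (fun _ : ℕ => ℝ) 2)
    (hv : ∀ j : Fin k, v j = lp.single 2 (j : ℕ) 1 + lp.single 2 ((j : ℕ) + k) 1) :
    IsPMaximal P (Submodule.span ℝ (Set.range v)) ∧
    Module.finrank ℝ (Submodule.span ℝ (Set.range v)) = k ∧
    ∀ M : Submodule ℝ (lp (fun _ : ℕ => ℝ) 2), IsPMaximal P M →
      FiniteDimensional ℝ M ∧ Module.finrank ℝ M = k := by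
  obtain rfl : P = _ := funext fun x => (hP x).trans (lp.inner_signFlip_self k x).symm
  obtain rfl : v = _ := funext hv
  have hdim : finrank ℝ (Fin k → ℝ) = k := Module.finrank_fin_fun ℝ
  have hker := lp.ker_headₗ_le_eigenspace_signFlip k
  have hli : LinearIndependent ℝ
      fun j : Fin k => (lp.single 2 (j : ℕ) 1 + lp.single 2 ((j : ℕ) + k) 1 : ℓ²) :=
    .of_comp (lp.headₗ k) <| by
      simpa only [Function.comp_def, lp.headₗ_single_add_single] using
        Pi.linearIndependent_single_one (Fin k) ℝ
  have hfin := (finrank_span_eq_card hli).trans (Fintype.card_fin k)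
  have hU := lp.finrank_span_single_comp (k := k) Fin.val_injective
  have hW := lp.finrank_span_single_comp (k := k) ((add_left_injective k).comp Fin.val_injective)
  refine ⟨isPMaximal_of_finrank_eq hker (isotropic_span ?_) (lp.hasEigenvalue_signFlip_one k)
    (hfin.trans hdim.symm), hfin, fun M hM => hdim ▸ finrank_eq_of_isPMaximal
      (lp.signFlip_isSymmetric k) hker (lp.span_single_le_eigenspace_signFlip_neg_one k)
      (lp.span_single_add_le_eigenspace_signFlip_one k) (hdim.trans hU.symm).le
      (hdim.trans hW.symm).le hM⟩
  rintro _ ⟨i, rfl⟩ _ ⟨j, rfl⟩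
  exact lp.inner_signFlip_single_add_single i.2 j.2

/-- For `k ≥ 1`, the 2-homogeneous polynomial `P_k : ℓ²(ℝ) → ℝ`,
`P_k x = -∑_{i<k} x(i)² + ∑_{i≥k} x(i)²`, vanishes on the span `M_k` of the vectors
`x_j = e_j + e_{j+k}` (`j = 0, …, k-1`), `M_k` is a `k`-dimensional `P_k`-maximal subspace,
and every `P_k`-maximal subspace is `k`-dimensional. -/
theorem exampleLtwo_pMaximal (k : ℕ) (hk : 1 ≤ k)
    (P : lp (fun _ : ℕ => ℝ) 2 → ℝ)
    (hP : ∀ x : lp (fun _ : ℕ => ℝ) 2,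
      P x = ∑' i : ℕ, (if i < k then (-1 : ℝ) else 1) * (x i) ^ 2)
    (v : Fin k → lp (fun _ : ℕ => ℝ) 2)
    (hv : ∀ j : Fin k, v j = lp.single 2 (j : ℕ) 1 + lp.single 2 ((j : ℕ) + k) 1) :
    IsPMaximal P (Submodule.span ℝ (Set.range v)) ∧
    Module.finrank ℝ (Submodule.span ℝ (Set.range v)) = k ∧
    ∀ M : Submodule ℝ (lp (fun _ : ℕ => ℝ) 2), IsPMaximal P M →
      FiniteDimensional ℝ M ∧ Module.finrank ℝ M = k :=
  exampleLtwo_pMaximal_general k P hP v hv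
end

section
/- Let X be a non-separable real Banach space. The following are equivalent: (i) X has the NIP; (ii) for every nuclear continuous 2-homogeneous polynomial P : X → ℝ there exists a nonzero x_P ∈ X with P(x_P) = 0; (iii) for every nuclear continuous 2-homogeneous polynomial P : X → ℝ there exists a non-separable linear subspace M ⊆ X with P identically zero on M; (iv) for every nonzero nuclear continuous 2-homogeneous polynomial P : X → ℝ, every P-maximal subspace of X is infinite-dimensional. -/
/-- `P` is a nuclear 2-homogeneous polynomial: `P x = ∑ᵢ λ_i φ_i(x)²` for a bounded
sequence `(φ_i)` of continuous linear functionals and an `ℓ¹` sequence `(λ_i)`. -/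
def IsNuclear2 {X : Type*} [NormedAddCommGroup X] [NormedSpace ℝ X] (P : X → ℝ) : Prop :=
  ∃ (φ : ℕ → (X →L[ℝ] ℝ)) (lam : ℕ → ℝ),
    (∃ C : ℝ, ∀ i, ‖φ i‖ ≤ C) ∧ Summable (fun i => |lam i|) ∧
    ∀ x, P x = ∑' i : ℕ, lam i * (φ i x) ^ 2

/-- `X` has the nontrivial intersection property (NIP). -/
def HasNIP (X : Type*) [NormedAddCommGroup X] [NormedSpace ℝ X] : Prop :=
  ∀ φ : ℕ → (X →L[ℝ] ℝ), (⨅ i, LinearMap.ker (φ i).toLinearMap) ≠ ⊥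

/-!
A nuclear `P = ∑ λᵢ φᵢ²` vanishes on `K = ⋂ ker φᵢ` and is invariant under translation by `K`.
The NIP makes every such `K` non-separable: adjoining to the `φᵢ` norming functionals of a
countable dense subset of `K` would otherwise leave only `0` in the common kernel. This gives (iii),
hence (ii); and a `P`-maximal subspace `M` contains `K` (since `P` vanishes on `M + K`), so it
cannot be finite-dimensional. Conversely, for `φᵢ` normalized to `‖φᵢ‖ ≤ 1`, the polynomial
`∑ 2⁻ⁱ φᵢ²` vanishes exactly on `⋂ ker φᵢ`, so (ii) gives the NIP; and (iv) gives (ii) because, by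
Zorn's lemma, a nonzero `P` has a `P`-maximal subspace, which is then nonzero.
-/

open TopologicalSpace

section

variable {X : Type*} [NormedAddCommGroup X] [NormedSpace ℝ X]

theorem hasNIP_iff :
    HasNIP X ↔ ∀ φ : ℕ → (X →L[ℝ] ℝ), ∃ x, x ≠ 0 ∧ ∀ i, φ i x = 0 := by
  simp only [HasNIP, Submodule.ne_bot_iff, Submodule.mem_iInf, LinearMap.mem_ker,
    ContinuousLinearMap.coe_coe]
  exact forall_congr' fun φ => exists_congr fun x => and_comm

theorem HasNIP.exists_ne_zero_forall_eq_zero {ι : Type*} [Countable ι] (h : HasNIP X)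
    (φ : ι → (X →L[ℝ] ℝ)) : ∃ x, x ≠ 0 ∧ ∀ i, φ i x = 0 := by
  obtain ⟨f, hf⟩ := exists_surjective_nat (Option ι)
  obtain ⟨x, hx0, hx⟩ := hasNIP_iff.1 h fun n => (f n).elim 0 φ
  refine ⟨x, hx0, fun i => ?_⟩
  obtain ⟨n, hn⟩ := hf (some i)
  simpa [hn] using hx n

/-- Take norming functionals `g y` of the points `y` of a countable set dense in `S`:
if `g y x = 0` then `‖y‖ = g y (y - x) ≤ ‖y - x‖`, so `‖x‖ ≤ 2 ‖x - y‖`. -/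
theorem TopologicalSpace.IsSeparable.exists_countable_dual_separating {S : Set X}
    (hS : IsSeparable S) :
    ∃ D : Set (X →L[ℝ] ℝ), D.Countable ∧ ∀ x ∈ S, (∀ g ∈ D, g x = 0) → x = 0 := by
  obtain ⟨c, hc, hSc⟩ := hS
  choose g hg_norm hg_apply using fun y : X => exists_dual_vector'' ℝ y
  refine ⟨g '' c, hc.image g, fun x hxS hx => ?_⟩
  by_contra hx0
  have hxpos : 0 < ‖x‖ := norm_pos_iff.2 hx0
  obtain ⟨y, hyc, hxy⟩ := Metric.mem_closure_iff.1 (hSc hxS) (‖x‖ / 2) (by positivity)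
  have hy : ‖y‖ ≤ ‖x - y‖ := calc
    ‖y‖ = g y (y - x) := by simp [hg_apply, hx (g y) ⟨y, hyc, rfl⟩]
    _ ≤ ‖g y‖ * ‖y - x‖ := le_of_abs_le ((g y).le_opNorm _)
    _ ≤ ‖x - y‖ := by rw [norm_sub_rev]; exact mul_le_of_le_one_left (norm_nonneg _) (hg_norm y)
  have := norm_le_norm_sub_add x y
  rw [dist_eq_norm] at hxy
  linarith

theorem HasNIP.not_isSeparable_iInf_ker (h : HasNIP X) (φ : ℕ → (X →L[ℝ] ℝ)) :
    ¬ IsSeparable ((⨅ i, LinearMap.ker (φ i).toLinearMap : Submodule ℝ X) : Set X) := by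
  intro hK
  obtain ⟨D, hD, hDsep⟩ := hK.exists_countable_dual_separating
  have := hD.to_subtype
  obtain ⟨x, hx0, hx⟩ := h.exists_ne_zero_forall_eq_zero (Sum.elim φ ((↑) : D → X →L[ℝ] ℝ))
  refine hx0 (hDsep x ?_ fun g hg => hx (.inr ⟨g, hg⟩))
  simpa [Submodule.mem_iInf] using fun i => hx (.inl i)

theorem Submodule.ne_bot_of_not_isSeparable {M : Submodule ℝ X} (hM : ¬ IsSeparable (M : Set X)) :
    M ≠ ⊥ := by
  rintro rfl
  exact hM (Set.countable_singleton 0).isSeparable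

theorem isContHomogPoly_tsum_mul_pow (n : ℕ) {ψ : ℕ → (X →L[ℝ] ℝ)} {c : ℕ → ℝ} {C : ℝ}
    (hψ : ∀ i, ‖ψ i‖ ≤ C) (hc : Summable fun i => |c i|) :
    IsContHomogPoly n fun x => ∑' i, c i * ψ i x ^ n := by
  let T : ℕ → ContinuousMultilinearMap ℝ (fun _ : Fin n => X) ℝ := fun i =>
    c i • (ContinuousMultilinearMap.mkPiAlgebra ℝ (Fin n) ℝ).compContinuousLinearMap fun _ => ψ i
  have hT_norm : ∀ i, ‖T i‖ ≤ |c i| * C ^ n := fun i => calc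
    ‖T i‖ ≤ |c i| * (1 * ∏ _j : Fin n, ‖ψ i‖) := by
      rw [norm_smul, Real.norm_eq_abs, ← ContinuousMultilinearMap.norm_mkPiAlgebra (𝕜 := ℝ)
        (ι := Fin n) (A := ℝ)]
      gcongr
      exact ContinuousMultilinearMap.norm_compContinuousLinearMap_le _ _
    _ ≤ |c i| * C ^ n := by
      rw [one_mul, Fin.prod_const]
      gcongr
      exact hψ i
  have hT : Summable T := .of_norm_bounded (hc.mul_right _) hT_norm
  set A := ∑' i, T i
  have hA : ∀ v, A v = ∑' i, c i * ∏ j, ψ i (v j) := fun v => by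
    simp [A, ContinuousMultilinearMap.tsum_eval hT, T]
  refine ⟨⟨A.toMultilinearMap, fun σ v => ?_, fun x => ?_⟩, ‖A‖, fun x => ?_⟩
  · simp only [ContinuousMultilinearMap.coe_coe, hA]
    exact tsum_congr fun i => by rw [Equiv.prod_comp σ fun j => ψ i (v j)]
  · simp [hA]
  · simpa [hA] using A.le_opNorm fun _ => x

theorem summable_mul_pow_apply {ψ : ℕ → (X →L[ℝ] ℝ)} {c : ℕ → ℝ} {C : ℝ}
    (hψ : ∀ i, ‖ψ i‖ ≤ C) (hc : Summable fun i => |c i|) (n : ℕ) (x : X) :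
    Summable fun i => c i * ψ i x ^ n :=
  .of_norm_bounded (hc.mul_right ((C * ‖x‖) ^ n)) fun i => by
    rw [norm_mul, norm_pow, Real.norm_eq_abs]
    gcongr
    exact (ψ i).le_opNorm x |>.trans (by gcongr; exact hψ i)

theorem hasNIP_of_forall_isNuclear2_exists_ne_zero
    (h : ∀ P : X → ℝ, IsContHomogPoly 2 P → IsNuclear2 P → ∃ x : X, x ≠ 0 ∧ P x = 0) :
    HasNIP X := by
  refine hasNIP_iff.2 fun φ => ?_
  let ψ i := (‖φ i‖ + 1)⁻¹ • φ i
  have hψ i : ‖ψ i‖ ≤ 1 := by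
    rw [norm_smul, norm_inv, Real.norm_of_nonneg (by positivity)]
    exact inv_mul_le_one_of_le₀ (by linarith) (by positivity)
  have hc : Summable fun i : ℕ => |(1 / 2 : ℝ) ^ i| := by
    simpa [abs_of_nonneg] using summable_geometric_two
  obtain ⟨x, hx0, hPx⟩ := h _ (isContHomogPoly_tsum_mul_pow 2 hψ hc)
    ⟨ψ, _, ⟨1, hψ⟩, hc, fun _ => rfl⟩
  have hterms := (hasSum_zero_iff_of_nonneg fun i => by positivity).1
    (hPx ▸ (summable_mul_pow_apply hψ hc 2 x).hasSum)
  refine ⟨x, hx0, fun i => ?_⟩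
  have hψi : ψ i x = 0 := by simpa using congrFun hterms i
  simpa [ψ, (by positivity : ‖φ i‖ + 1 ≠ 0)] using hψi

theorem IsPMaximal.iInf_ker_le {P : X → ℝ} {M : Submodule ℝ X} (hM : IsPMaximal P M)
    (lam : ℕ → ℝ) (φ : ℕ → (X →L[ℝ] ℝ)) (hP : ∀ x, P x = ∑' i, lam i * φ i x ^ 2) :
    ⨅ i, LinearMap.ker (φ i).toLinearMap ≤ M := by
  have hsup : ∀ x ∈ M ⊔ ⨅ i, LinearMap.ker (φ i).toLinearMap, P x = 0 := by
    intro x hx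
    obtain ⟨m, hm, k, hk, rfl⟩ := Submodule.mem_sup.1 hx
    simp only [Submodule.mem_iInf, LinearMap.mem_ker, ContinuousLinearMap.coe_coe] at hk
    simpa [hP, hk] using hM.2.1 m hm
  exact le_sup_right.trans (hM.2.2 _ le_sup_left hsup).le

theorem exists_isPMaximal {P : X → ℝ} (h0 : P 0 = 0) (hP : P ≠ 0) :
    ∃ M : Submodule ℝ X, IsPMaximal P M := by
  obtain ⟨M, -, hM⟩ := zorn_le_nonempty₀ {M : Submodule ℝ X | ∀ x ∈ M, P x = 0}
    (fun c hc hchain N hN => ⟨sSup c, fun x hx => by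
      obtain ⟨M, hMc, hxM⟩ := (Submodule.mem_sSup_of_directed ⟨N, hN⟩ hchain.directedOn).1 hx
      exact hc hMc x hxM, fun _ => le_sSup⟩)
    ⊥ (by simpa using h0)
  refine ⟨M, fun hM_top => hP (funext fun x => hM.prop x (hM_top ▸ Submodule.mem_top)), hM.prop,
    fun M₁ hle hM₁ => (hM.eq_of_le hM₁ hle).symm⟩

end

theorem nip_tfae_general {X : Type*} [NormedAddCommGroup X] [NormedSpace ℝ X]
    (hX : ¬ TopologicalSpace.SeparableSpace X) :
    List.TFAE
      [HasNIP X,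
       ∀ P : X → ℝ, IsContHomogPoly 2 P → IsNuclear2 P → ∃ x : X, x ≠ 0 ∧ P x = 0,
       ∀ P : X → ℝ, IsContHomogPoly 2 P → IsNuclear2 P →
         ∃ M : Submodule ℝ X, ¬ TopologicalSpace.IsSeparable (M : Set X) ∧ ∀ x ∈ M, P x = 0,
       ∀ P : X → ℝ, IsContHomogPoly 2 P → IsNuclear2 P → P ≠ 0 →
         ∀ M : Submodule ℝ X, IsPMaximal P M → ¬ FiniteDimensional ℝ M] := by
  tfae_have 1 → 3 := by
    rintro hNIP P - ⟨φ, lam, -, -, hP⟩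
    refine ⟨_, hNIP.not_isSeparable_iInf_ker φ, fun x hx => ?_⟩
    simp_all [Submodule.mem_iInf]
  tfae_have 3 → 2 := by
    intro h3 P hPc hPn
    obtain ⟨M, hM_sep, hM⟩ := h3 P hPc hPn
    obtain ⟨x, hxM, hx0⟩ := (Submodule.ne_bot_iff M).1 (Submodule.ne_bot_of_not_isSeparable hM_sep)
    exact ⟨x, hx0, hM x hxM⟩
  tfae_have 2 → 1 := hasNIP_of_forall_isNuclear2_exists_ne_zero
  tfae_have 1 → 4 := by
    rintro hNIP P - ⟨φ, lam, -, -, hP⟩ - M hM hM_fin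
    exact hNIP.not_isSeparable_iInf_ker φ
      ((IsSeparable.of_subtype (M : Set X)).mono (hM.iInf_ker_le lam φ hP))
  tfae_have 4 → 2 := by
    intro h4 P hPc hPn
    by_cases hP0 : P = 0
    · have : Nontrivial X := not_subsingleton_iff_nontrivial.1 fun _ => hX inferInstance
      obtain ⟨x, hx⟩ := exists_ne (0 : X)
      exact ⟨x, hx, by rw [hP0]; rfl⟩
    obtain ⟨M, hM⟩ := exists_isPMaximal (by obtain ⟨φ, lam, -, -, hP⟩ := hPn; simp [hP]) hP0
    obtain ⟨x, hxM, hx0⟩ := (Submodule.ne_bot_iff M).1 fun hbot =>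
      h4 P hPc hPn hP0 M hM (hbot ▸ inferInstance)
    exact ⟨x, hx0, hM.2.1 x hxM⟩
  tfae_finish

/-- For a non-separable real Banach space `X` the following are equivalent:
(i) `X` has the NIP;
(ii) every nuclear continuous 2-homogeneous polynomial on `X` has a nontrivial zero;
(iii) every nuclear continuous 2-homogeneous polynomial on `X` vanishes identically on some
non-separable subspace;
(iv) for every nonzero nuclear continuous 2-homogeneous polynomial on `X`, every
`P`-maximal subspace is infinite-dimensional. -/
theorem nip_tfae {X : Type*} [NormedAddCommGroup X] [NormedSpace ℝ X] [CompleteSpace X]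
    (hX : ¬ TopologicalSpace.SeparableSpace X) :
    List.TFAE
      [HasNIP X,
       ∀ P : X → ℝ, IsContHomogPoly 2 P → IsNuclear2 P → ∃ x : X, x ≠ 0 ∧ P x = 0,
       ∀ P : X → ℝ, IsContHomogPoly 2 P → IsNuclear2 P →
         ∃ M : Submodule ℝ X, ¬ TopologicalSpace.IsSeparable (M : Set X) ∧ ∀ x ∈ M, P x = 0,
       ∀ P : X → ℝ, IsContHomogPoly 2 P → IsNuclear2 P → P ≠ 0 →
         ∀ M : Submodule ℝ X, IsPMaximal P M → ¬ FiniteDimensional ℝ M] :=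
  nip_tfae_general hX
end
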